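/- arXiv:1110.1686 — 3 statements merged into one kernel-verified Lean document; each statement's English description precedes it below -/
import Mathlib

section
/- Let R be a fusion ring with basis B, faithfully graded by a group G via a surjective grading λ : B → G. If there exists a faithful element X ∈ B (i.e. every Y ∈ B appears in some power Xⁿ), then G is cyclic and its order divides the order of X. -/
open Finset

structure FusionData (B : Type) [Fintype B] [DecidableEq B] where
  one : B
  star : B → B
  N : B → B → B → ℕ
  N_one_left : ∀ X Y : B, N one X Y = if Y = X then 1 else 0
  N_one_right : ∀ X Y : B, N X one Y = if Y = X then 1 else 0
  mult_one : ∀ X Y : B, N X Y one = if Y = star X then 1 else 0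
  star_involutive : ∀ X : B, star (star X) = X
  assoc : ∀ X Y Z W : B, ∑ T : B, N X Y T * N T Z W = ∑ T : B, N Y Z T * N X T W
  frob : ∀ X Y Z : B, N X Y Z = N (star X) Z Y

variable {B : Type} [Fintype B] [DecidableEq B]

/-- Multiplicity of `Y` in the `n`-th tensor power of `X`. -/
def FusionData.powMult (F : FusionData B) (X : B) : ℕ → B → ℕ
  | 0, Y => if Y = F.one then 1 else 0
  | n + 1, Y => ∑ Z : B, F.powMult X n Z * F.N Z X Y

/-- The order of a basis element: least `n ≥ 1` with `1` appearing in `Xⁿ`. -/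
noncomputable def FusionData.ord (F : FusionData B) (X : B) : ℕ :=
  sInf {n : ℕ | 1 ≤ n ∧ 0 < F.powMult X n F.one}

/-- `X` is faithful: every basis element appears in some power of `X`. -/
def FusionData.Faithful (F : FusionData B) (X : B) : Prop :=
  ∀ Y : B, ∃ n : ℕ, 1 ≤ n ∧ 0 < F.powMult X n Y

/-- Multiplicity of `Y` in the product of a list of basis elements. -/
def FusionData.prodMult (F : FusionData B) : List B → B → ℕ
  | [], Y => if Y = F.one then 1 else 0
  | X :: l, Y => ∑ Z : B, F.N X Z Y * FusionData.prodMult F l Z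

/-- A grading of the fusion ring by a group `G`. -/
def FusionData.IsGrading (F : FusionData B) {G : Type} [Group G] (lam : B → G) : Prop :=
  (∀ X : B, lam (F.star X) = (lam X)⁻¹) ∧
  (∀ X Y Z : B, 0 < F.N X Y Z → lam Z = lam X * lam Y)

/-!
Every constituent `Y` of `Xⁿ` has degree `λ(X)ⁿ`. Since `X` is faithful and `λ` is surjective,
`λ(X)` therefore generates `G`, so `|G|` is the order of `λ(X)`; and `1` occurs in `X ^ ord X`,
so `λ(X) ^ ord X = λ(1) = 1`.
-/

namespace FusionData

theorem Faithful.powMult_ord_one_pos {F : FusionData B} {X : B} (hX : F.Faithful X) :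
    0 < F.powMult X (F.ord X) F.one := by
  obtain ⟨n, hn, hpos⟩ := hX F.one
  exact (Nat.sInf_mem (s := {n : ℕ | 1 ≤ n ∧ 0 < F.powMult X n F.one}) ⟨n, hn, hpos⟩).2

namespace IsGrading

variable {G : Type} [Group G] {F : FusionData B} {lam : B → G}

theorem map_one (hgr : F.IsGrading lam) : lam F.one = 1 :=
  right_eq_mul.mp (hgr.2 F.one F.one F.one (by simp [F.N_one_left]))

theorem map_of_powMult_pos (hgr : F.IsGrading lam) (X : B) :
    ∀ (n : ℕ) (Y : B), 0 < F.powMult X n Y → lam Y = lam X ^ n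
  | 0, Y, h => by
    have hY : Y = F.one := by
      by_contra hne
      simp [powMult, hne] at h
    rw [hY, hgr.map_one, pow_zero]
  | n + 1, Y, h => by
    obtain ⟨Z, -, hZ⟩ := Finset.exists_ne_zero_of_sum_ne_zero h.ne'
    have hZ_pow : 0 < F.powMult X n Z := Nat.pos_of_ne_zero (left_ne_zero_of_mul hZ)
    have hZ_N : 0 < F.N Z X Y := Nat.pos_of_ne_zero (right_ne_zero_of_mul hZ)
    rw [hgr.2 Z X Y hZ_N, map_of_powMult_pos hgr X n Z hZ_pow, pow_succ]

theorem mem_zpowers_of_faithful (hgr : F.IsGrading lam) (hsurj : Function.Surjective lam)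
    {X : B} (hX : F.Faithful X) (g : G) : g ∈ Subgroup.zpowers (lam X) := by
  obtain ⟨Y, rfl⟩ := hsurj g
  obtain ⟨n, -, hn⟩ := hX Y
  rw [hgr.map_of_powMult_pos X n Y hn]
  exact Subgroup.npow_mem_zpowers (lam X) n

theorem pow_ord_eq_one (hgr : F.IsGrading lam) {X : B} (hX : F.Faithful X) :
    lam X ^ F.ord X = 1 := by
  rw [← hgr.map_of_powMult_pos X _ _ hX.powMult_ord_one_pos, hgr.map_one]

end IsGrading

end FusionData

/-- a faithful basis element forces the grading group to be cyclic of order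
dividing the order of the element. -/
theorem grading_group_cyclic_of_faithful {G : Type} [Group G] [Fintype G]
    (F : FusionData B) (lam : B → G) (hgr : F.IsGrading lam)
    (hsurj : Function.Surjective lam) (X : B) (hX : F.Faithful X) :
    IsCyclic G ∧ Fintype.card G ∣ F.ord X := by
  have hgen : ∀ g : G, g ∈ Subgroup.zpowers (lam X) := hgr.mem_zpowers_of_faithful hsurj hX
  have hcard : Fintype.card G = orderOf (lam X) := by
    rw [← Nat.card_eq_fintype_card, orderOf_eq_card_of_forall_mem_zpowers hgen]
  exact ⟨⟨lam X, hgen⟩, hcard ▸ orderOf_dvd_of_pow_eq_one (hgr.pow_ord_eq_one hX)⟩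
end

section
/- In a fusion ring with basis B, every nonzero basis element X has finite order, and ord(X) ≤ |B| (the rank). -/
open Finset

variable {B : Type} [Fintype B] [DecidableEq B]

/-!
Let `M = ∑_Y L_Y` be the sum of the matrices of left multiplication by basis elements. By
Frobenius reciprocity and associativity, `M` is symmetric, has positive entries and commutes with
the matrix `R` of right multiplication by `X`. Its Perron–Frobenius eigenvector `u > 0` spans its
eigenspace, so `u` is an eigenvector of both `R` and `Rᵀ`, with the same eigenvalue since
`⟪u, R u⟫ = ⟪Rᵀ u, u⟫`. Then the flow `u_Z N_{ZX}^Y u_Y` along the edges `Z → Y` of right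
multiplication by `X` is balanced at every vertex, so a set of basis elements that no edge leaves
is also one that no edge enters. The elements occurring in some `Xⁿ` with `n ≥ 1` form such a set;
it contains `X`, hence also `1`, because of the edge `1 → X`. Finally, the set of elements
occurring in one of `X¹, …, Xᵏ` grows strictly with `k` until it stabilises, so it is already
complete for `k = |B|`.
-/

open Matrix

namespace Matrix

variable {n : Type*} [Fintype n]

theorem mulVec_pos {M : Matrix n n ℝ} (hM : ∀ i j, 0 < M i j) {v : n → ℝ} (hv : 0 ≤ v)
    (hv₀ : v ≠ 0) (i : n) : 0 < (M *ᵥ v) i := by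
  obtain ⟨j, hj⟩ := Function.ne_iff.mp hv₀
  exact sum_pos' (fun k _ => mul_nonneg (hM i k).le (hv k))
    ⟨j, mem_univ j, mul_pos (hM i j) ((hv j).lt_of_ne (Ne.symm hj))⟩

theorem dotProduct_mulVec_le_abs {M : Matrix n n ℝ} (hM : ∀ i j, 0 ≤ M i j) (x : n → ℝ) :
    x ⬝ᵥ M *ᵥ x ≤ (fun i => |x i|) ⬝ᵥ M *ᵥ fun i => |x i| := by
  simp only [dotProduct, mulVec, mul_sum]
  refine sum_le_sum fun i _ => sum_le_sum fun j _ => ?_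
  calc x i * (M i j * x j) ≤ |x i * (M i j * x j)| := le_abs_self _
    _ = |x i| * (M i j * |x j|) := by rw [abs_mul, abs_mul, abs_of_nonneg (hM i j)]

theorem exists_pos_eigenvector [DecidableEq n] [Nonempty n] {M : Matrix n n ℝ} (hM : M.IsSymm)
    (hpos : ∀ i j, 0 < M i j) : ∃ (c : ℝ) (u : n → ℝ), (∀ i, 0 < u i) ∧ M *ᵥ u = c • u := by
  set T := toEuclideanCLM (𝕜 := ℝ) M
  have hT : IsSelfAdjoint T :=
    (isHermitian_iff_isSelfAdjoint.mp (isHermitian_iff_isSymm.mpr hM)).map _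
  have hquad : ∀ x, T.reApplyInnerSelf x = WithLp.ofLp x ⬝ᵥ M *ᵥ WithLp.ofLp x := fun x => by
    rw [ContinuousLinearMap.reApplyInnerSelf_apply, RCLike.re_to_real, real_inner_comm,
      inner_toEuclideanCLM]
  obtain ⟨x, hx, hxmax⟩ := (isCompact_sphere (0 : EuclideanSpace ℝ n) 1).exists_isMaxOn
    (NormedSpace.sphere_nonempty.mpr zero_le_one) T.reApplyInnerSelf_continuous.continuousOn
  set u : n → ℝ := fun i => |x i|
  set y : EuclideanSpace ℝ n := WithLp.toLp 2 u
  have hnorm : ‖y‖ = 1 := by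
    rw [← mem_sphere_zero_iff_norm.mp hx, EuclideanSpace.norm_eq, EuclideanSpace.norm_eq]
    simp [y, u]
  have hmax : IsMaxOn T.reApplyInnerSelf (Metric.sphere 0 ‖y‖) y := fun z hz => by
    rw [hnorm] at hz
    calc T.reApplyInnerSelf z ≤ T.reApplyInnerSelf x := hxmax hz
      _ ≤ T.reApplyInnerSelf y := by
        rw [hquad, hquad]
        exact dotProduct_mulVec_le_abs (fun i j => (hpos i j).le) _
  have heig : M *ᵥ u = T.rayleighQuotient y • u :=
    congrArg WithLp.ofLp (hT.eq_smul_self_of_isLocalExtrOn (Or.inr hmax.localize))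
  have hu₀ : u ≠ 0 := fun h => by simp [y, h] at hnorm
  refine ⟨_, u, fun i => (abs_nonneg (x i)).lt_of_ne fun h => ?_, heig⟩
  have := mulVec_pos hpos (fun j => abs_nonneg (x j)) hu₀ i
  simp [heig, u, ← h] at this

theorem exists_eq_smul_of_mulVec_eq_smul [Nonempty n] {M : Matrix n n ℝ}
    (hpos : ∀ i j, 0 < M i j) {c : ℝ} {u w : n → ℝ} (hu : ∀ i, 0 < u i)
    (hMu : M *ᵥ u = c • u) (hMw : M *ᵥ w = c • w) : ∃ t : ℝ, w = t • u := by
  -- `v = w - t u ≥ 0` vanishes at `i₀`, while `M v > 0` unless `v = 0`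
  obtain ⟨i₀, -, hmin⟩ := exists_min_image univ (fun i => w i / u i) univ_nonempty
  set t := w i₀ / u i₀
  set v := w - t • u
  have hv : 0 ≤ v := fun i => by
    simpa [v] using (le_div_iff₀ (hu i)).mp (hmin i (mem_univ i))
  have hvi₀ : v i₀ = 0 := by simp [v, t, div_mul_cancel₀ _ (hu i₀).ne']
  have hMv : M *ᵥ v = c • v := by
    simp only [v, mulVec_sub, mulVec_smul, hMu, hMw, smul_sub, smul_comm t c]
  refine ⟨t, sub_eq_zero.mp (by_contra fun hv₀ => ?_)⟩
  have := mulVec_pos hpos hv hv₀ i₀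
  simp [hMv, hvi₀] at this

theorem exists_pos_common_eigenvector [DecidableEq n] [Nonempty n] {M R : Matrix n n ℝ}
    (hM : M.IsSymm) (hpos : ∀ i j, 0 < M i j) (hcomm : Commute M R) :
    ∃ (u : n → ℝ) (t : ℝ), (∀ i, 0 < u i) ∧ R *ᵥ u = t • u ∧ Rᵀ *ᵥ u = t • u := by
  obtain ⟨c, u, hu, hMu⟩ := exists_pos_eigenvector hM hpos
  have hcommT : Commute M Rᵀ := by
    have := congrArg transpose hcomm.eq
    rw [transpose_mul, transpose_mul, hM.eq] at this
    exact this.symm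
  have heig {A : Matrix n n ℝ} (hA : Commute M A) : M *ᵥ (A *ᵥ u) = c • (A *ᵥ u) := by
    rw [mulVec_mulVec, hA.eq, ← mulVec_mulVec, hMu, mulVec_smul]
  obtain ⟨t, ht⟩ := exists_eq_smul_of_mulVec_eq_smul hpos hu hMu (heig hcomm)
  obtain ⟨t', ht'⟩ := exists_eq_smul_of_mulVec_eq_smul hpos hu hMu (heig hcommT)
  have huu : u ⬝ᵥ u ≠ 0 := fun h =>
    (hu (Classical.arbitrary n)).ne' (by rw [dotProduct_self_eq_zero.mp h]; rfl)
  have htt' : t = t' := by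
    have h := dotProduct_mulVec u R u
    rw [← mulVec_transpose, ht, ht', dotProduct_smul, smul_dotProduct] at h
    exact mul_right_cancel₀ huu h
  exact ⟨u, t, hu, ht, htt' ▸ ht'⟩

theorem apply_eq_zero_of_mulVec_eq_smul_of_transpose {R : Matrix n n ℝ} (hR : ∀ i j, 0 ≤ R i j)
    {u : n → ℝ} (hu : ∀ i, 0 < u i) {t : ℝ} (hRu : R *ᵥ u = t • u) (hRTu : Rᵀ *ᵥ u = t • u)
    {S : Finset n} (hS : ∀ i ∈ S, ∀ j ∉ S, R i j = 0) {i j : n} (hi : i ∉ S) (hj : j ∈ S) :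
    R i j = 0 := by
  classical
  -- a flow with equal in- and out-flow at every vertex; nothing leaves `S`, so nothing enters
  set f : n → n → ℝ := fun i j => u i * R i j * u j
  have hrow : ∀ i, ∑ j, f i j = t * u i ^ 2 := fun i => by
    have := congrFun hRu i
    simp only [mulVec, dotProduct, Pi.smul_apply, smul_eq_mul] at this
    simp only [f, mul_assoc, ← mul_sum, this]; ring
  have hcol : ∀ j, ∑ i, f i j = t * u j ^ 2 := fun j => by
    have := congrFun hRTu j
    simp only [mulVec, dotProduct, transpose_apply, Pi.smul_apply, smul_eq_mul] at this
    simp only [f, ← sum_mul, mul_comm (u _) (R _ _), this]; ring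
  have hflow : ∑ j ∈ S, ∑ i ∈ Sᶜ, f i j = 0 := by
    calc ∑ j ∈ S, ∑ i ∈ Sᶜ, f i j = ∑ j ∈ S, ∑ i, f i j - ∑ j ∈ S, ∑ i ∈ S, f i j := by
          simp only [← sum_add_sum_compl S, sum_add_distrib, add_sub_cancel_left]
      _ = ∑ i ∈ S, ∑ j, f i j - ∑ i ∈ S, ∑ j ∈ S, f i j := by
          simp only [hrow, hcol]; rw [sum_comm (s := S) (t := S)]
      _ = 0 := sub_eq_zero.mpr <| sum_congr rfl fun i hi =>
          (sum_subset (subset_univ S) fun j _ hj => by simp [f, hS i hi j hj]).symm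
  have hf : ∀ i j, 0 ≤ f i j := fun i j => by
    have := hR i j; have := hu i; have := hu j; positivity
  rw [sum_eq_zero_iff_of_nonneg fun j _ => sum_nonneg fun i _ => hf i j] at hflow
  have := (sum_eq_zero_iff_of_nonneg fun i _ => hf i j).mp (hflow j hj) i (mem_compl.mpr hi)
  simpa [f, (hu i).ne', (hu j).ne'] using this

end Matrix

theorem Finset.subset_apply_card_of_monotone {α : Type*} [Fintype α] {e : ℕ → Finset α}
    (he : Monotone e) (hstab : ∀ m, e m = e (m + 1) → e (m + 1) = e (m + 2)) (n : ℕ) :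
    e n ⊆ e (Fintype.card α) := by
  rcases le_total n (Fintype.card α) with h | h
  · exact he h
  have hcard : #(e n) = #(e (Fintype.card α)) :=
    Nat.stabilises_of_monotone (f := fun k => #(e k)) (fun _ _ hab => card_le_card (he hab))
      (fun m => card_le_univ _)
      (fun m hm => congrArg card (hstab m (eq_of_subset_of_card_le (he m.le_succ) hm.ge))) h
  exact (eq_of_subset_of_card_le (he h) hcard.le).ge

namespace FusionData

variable (F : FusionData B)

theorem star_injective : Function.Injective F.star :=
  Function.Involutive.injective F.star_involutive

theorem N_rotate (X Y Z : B) : F.N X Y Z = F.N Y (F.star Z) (F.star X) := by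
  simpa [F.mult_one, F.star_injective.eq_iff] using F.assoc X Y (F.star Z) F.one

theorem exists_N_pos (Z W : B) : ∃ T, 0 < F.N Z W T := by
  have h : 0 < ∑ T, F.N W (F.star W) T * F.N Z T Z :=
    sum_pos_iff.mpr ⟨F.one, mem_univ _, by simp [F.mult_one, F.N_one_right]⟩
  rw [← F.assoc] at h
  obtain ⟨T, -, hT⟩ := sum_pos_iff.mp h
  exact ⟨T, (CanonicallyOrderedAdd.mul_pos.mp hT).1⟩

theorem exists_N_pos_left (T W : B) : ∃ Y, 0 < F.N Y T W := by
  obtain ⟨Y, hY⟩ := F.exists_N_pos T (F.star W)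
  exact ⟨F.star Y, by rwa [N_rotate, F.star_involutive]⟩

theorem powMult_succ_pos_iff (X : B) (n : ℕ) (Y : B) :
    0 < F.powMult X (n + 1) Y ↔ ∃ Z, 0 < F.powMult X n Z ∧ 0 < F.N Z X Y := by
  simp [powMult, sum_pos_iff, CanonicallyOrderedAdd.mul_pos]

def leftMulMatrix (Y : B) : Matrix B B ℝ := Matrix.of fun T W => (F.N Y T W : ℝ)

def rightMulMatrix (X : B) : Matrix B B ℝ := Matrix.of fun Z Y => (F.N Z X Y : ℝ)

theorem commute_leftMulMatrix_rightMulMatrix (Y X : B) :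
    Commute (F.leftMulMatrix Y) (F.rightMulMatrix X) := by
  ext T W
  simp only [leftMulMatrix, rightMulMatrix, Matrix.mul_apply, Matrix.of_apply]
  exact_mod_cast F.assoc Y T X W

theorem transpose_leftMulMatrix (Y : B) : (F.leftMulMatrix Y)ᵀ = F.leftMulMatrix (F.star Y) := by
  ext T W
  simp [leftMulMatrix, F.frob Y W T]

theorem isSymm_sum_leftMulMatrix : (∑ Y, F.leftMulMatrix Y).IsSymm := by
  rw [Matrix.IsSymm, Matrix.transpose_sum]
  simp only [transpose_leftMulMatrix]
  exact Equiv.sum_comp (Function.Involutive.toPerm _ F.star_involutive) F.leftMulMatrix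

theorem sum_leftMulMatrix_pos (T W : B) : 0 < (∑ Y, F.leftMulMatrix Y) T W := by
  obtain ⟨Y, hY⟩ := F.exists_N_pos_left T W
  rw [Matrix.sum_apply]
  exact sum_pos' (fun Y _ => by simp [leftMulMatrix]) ⟨Y, mem_univ Y, by simpa [leftMulMatrix]⟩

def powSupportUpTo (X : B) (k : ℕ) : Finset B :=
  (Icc 1 k).biUnion fun j => univ.filter fun Y => 0 < F.powMult X j Y

variable {F} in
theorem mem_powSupportUpTo {X Y : B} {k : ℕ} :
    Y ∈ F.powSupportUpTo X k ↔ ∃ j ∈ Icc 1 k, 0 < F.powMult X j Y := by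
  simp [powSupportUpTo]

theorem powSupportUpTo_mono (X : B) : Monotone (F.powSupportUpTo X) := fun _ _ hkl _ hY => by
  obtain ⟨j, hj, hjY⟩ := mem_powSupportUpTo.mp hY
  exact mem_powSupportUpTo.mpr ⟨j, Icc_subset_Icc_right hkl hj, hjY⟩

theorem mem_powSupportUpTo_succ {X Y Z : B} {k : ℕ} (hZ : Z ∈ F.powSupportUpTo X k)
    (hN : 0 < F.N Z X Y) : Y ∈ F.powSupportUpTo X (k + 1) := by
  obtain ⟨j, hj, hjZ⟩ := mem_powSupportUpTo.mp hZ
  refine mem_powSupportUpTo.mpr ⟨j + 1, ?_, (F.powMult_succ_pos_iff X j Y).mpr ⟨Z, hjZ, hN⟩⟩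
  simp only [mem_Icc] at hj ⊢
  omega

theorem powSupportUpTo_subset_card (X : B) (k : ℕ) :
    F.powSupportUpTo X k ⊆ F.powSupportUpTo X (Fintype.card B) := by
  refine subset_apply_card_of_monotone (F.powSupportUpTo_mono X) (fun m hm => ?_) k
  refine (F.powSupportUpTo_mono X m.succ.le_succ).antisymm fun Y hY => ?_
  obtain ⟨j, hj, hjY⟩ := mem_powSupportUpTo.mp hY
  rcases (mem_Icc.mp hj).2.lt_or_eq with hlt | rfl
  · exact mem_powSupportUpTo.mpr ⟨j, mem_Icc.mpr ⟨(mem_Icc.mp hj).1, by omega⟩, hjY⟩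
  obtain ⟨Z, hZ, hN⟩ := (F.powMult_succ_pos_iff X (m + 1) Y).mp hjY
  have hZm : Z ∈ F.powSupportUpTo X m :=
    hm ▸ mem_powSupportUpTo.mpr ⟨m + 1, mem_Icc.mpr ⟨by omega, le_rfl⟩, hZ⟩
  exact F.mem_powSupportUpTo_succ hZm hN

theorem one_mem_powSupportUpTo_card (X : B) : F.one ∈ F.powSupportUpTo X (Fintype.card B) := by
  have : Nonempty B := ⟨F.one⟩
  set S := F.powSupportUpTo X (Fintype.card B)
  obtain ⟨u, t, hu, hRu, hRTu⟩ := exists_pos_common_eigenvector F.isSymm_sum_leftMulMatrix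
    F.sum_leftMulMatrix_pos
    (Commute.sum_left _ _ _ fun Y _ => F.commute_leftMulMatrix_rightMulMatrix Y X)
  have hX : X ∈ S := mem_powSupportUpTo.mpr
    ⟨1, mem_Icc.mpr ⟨le_rfl, Fintype.card_pos⟩, by simp [powMult, F.N_one_left]⟩
  have hclosed : ∀ Z ∈ S, ∀ Y ∉ S, F.rightMulMatrix X Z Y = 0 := fun Z hZ Y hY => by
    by_contra hN
    have hN : 0 < F.N Z X Y := Nat.pos_of_ne_zero (by simpa [rightMulMatrix] using hN)
    exact hY (F.powSupportUpTo_subset_card X _ (F.mem_powSupportUpTo_succ hZ hN))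
  by_contra h
  have := apply_eq_zero_of_mulVec_eq_smul_of_transpose (fun _ _ => Nat.cast_nonneg _) hu hRu
    hRTu hclosed h hX
  simp [F.N_one_left] at this

end FusionData

/-- every basis element has finite order, bounded by the rank. -/
theorem ord_le_rank (F : FusionData B) (X : B) :
    0 < F.powMult X (F.ord X) F.one ∧ 1 ≤ F.ord X ∧ F.ord X ≤ Fintype.card B := by
  obtain ⟨n, hn, hpos⟩ := FusionData.mem_powSupportUpTo.mp (F.one_mem_powSupportUpTo_card X)
  have hn' : n ∈ {n | 1 ≤ n ∧ 0 < F.powMult X n F.one} := ⟨(mem_Icc.mp hn).1, hpos⟩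
  obtain ⟨hord, hmult⟩ : F.ord X ∈ {n | 1 ≤ n ∧ 0 < F.powMult X n F.one} :=
    Nat.sInf_mem ⟨n, hn'⟩
  exact ⟨hmult, hord, (Nat.sInf_le hn').trans (mem_Icc.mp hn).2⟩
end

section
/- Let G be a finite nilpotent group whose center Z(G) is cyclic. Then G has a faithful irreducible complex character. -/
/-!
A finite cyclic group has a faithful character, so let `χ : Z(G) →* ℂˣ` be injective. Since
`Z(G)` is central in `ℂ[G]`, the common eigenspace `{a | z * a = χ z • a for all z ∈ Z(G)}` is a
left ideal; it is nonzero, as it contains `∑ z, χ z⁻¹ • z`. A simple submodule `S` of it is an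
irreducible representation on which `Z(G)` acts through `χ`, so the kernel of `S` meets `Z(G)`
trivially. In a nilpotent group every nontrivial normal subgroup meets the centre, hence `S` is
faithful.
-/

open CategoryTheory Limits
open scoped MonoidAlgebra

namespace Subgroup

open scoped commutatorElement

variable {G : Type*} [Group G] {N : Subgroup G}

theorem Normal.inf_upperCentralSeries_succ_le_center (hN : N.Normal) {m : ℕ}
    (h : N ⊓ upperCentralSeries G m = ⊥) : N ⊓ upperCentralSeries G (m + 1) ≤ center G := by
  rintro x ⟨hxN, hx⟩
  refine mem_center_iff.2 fun g => (commutatorElement_eq_one_iff_mul_comm.1 ?_).symm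
  have hcomm : ⁅x, g⁆ ∈ N ⊓ upperCentralSeries G m := by
    refine mem_inf.2 ⟨?_, mem_upperCentralSeries_succ_iff.1 hx g⟩
    rw [commutatorElement_def, mul_assoc, mul_assoc]
    exact N.mul_mem hxN (by simpa only [mul_assoc] using hN.conj_mem _ (N.inv_mem hxN) g)
  rwa [h, mem_bot] at hcomm

theorem Normal.inf_center_ne_bot [Group.IsNilpotent G] (hN : N.Normal) (hN' : N ≠ ⊥) :
    N ⊓ center G ≠ ⊥ := by
  suffices ∀ m, N ⊓ upperCentralSeries G m ≠ ⊥ → N ⊓ center G ≠ ⊥ by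
    obtain ⟨n, hn⟩ := Group.IsNilpotent.nilpotent (G := G)
    exact this n (by rwa [hn, inf_top_eq])
  intro m
  induction m with
  | zero => simp
  | succ m ih =>
    intro hm
    by_cases h : N ⊓ upperCentralSeries G m = ⊥
    · exact fun hbot => hm (le_bot_iff.1 (hbot ▸ le_inf inf_le_left
        (hN.inf_upperCentralSeries_succ_le_center h)))
    · exact ih h

end Subgroup

theorem MonoidHom.injective_of_injOn_center {G H : Type*} [Group G] [Group.IsNilpotent G]
    [Monoid H] (f : G →* H) (hf : Set.InjOn f (Subgroup.center G)) : Function.Injective f := by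
  rw [← ker_eq_bot_iff]
  by_contra hker
  refine f.normal_ker.inf_center_ne_bot hker (eq_bot_iff.2 ?_)
  rintro x ⟨hxker, hxc⟩
  exact Subgroup.mem_bot.2 (hf hxc (Subgroup.one_mem _) (by simpa using hxker))

theorem IsCyclic.exists_monoidHom_units_injective (G M : Type*) [Group G] [Finite G]
    [IsCyclic G] [CommMonoid M] [HasEnoughRootsOfUnity M (Nat.card G)] :
    ∃ χ : G →* Mˣ, Function.Injective χ := by
  let e : G ≃* rootsOfUnity (Nat.card G) M :=
    mulEquivOfCyclicCardEq (HasEnoughRootsOfUnity.natCard_rootsOfUnity M (Nat.card G)).symm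
  exact ⟨(rootsOfUnity (Nat.card G) M).subtype.comp e.toMonoidHom,
    Subtype.val_injective.comp e.injective⟩

universe u

section Monoid

variable {k G : Type u} [Field k] [Monoid G]

namespace Representation

theorem ofModule'_asAlgebraHom_apply (M : Type*) [AddCommGroup M] [Module k M] [Module k[G] M]
    [IsScalarTower k k[G] M] (r : k[G]) (x : M) :
    (ofModule' (k := k) (G := G) M).asAlgebraHom r x = r • x := by
  simp [asAlgebraHom_def, ofModule']

theorem isIrreducible_ofModule' (M : Type*) [AddCommGroup M] [Module k M] [Module k[G] M]
    [IsScalarTower k k[G] M] [IsSimpleModule k[G] M] :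
    (ofModule' (k := k) (G := G) M).IsIrreducible := by
  rw [irreducible_iff_isSimpleModule_asModule]
  exact IsSimpleModule.congr
    { (ofModule' M).asModuleEquiv with map_smul' := ofModule'_asAlgebraHom_apply M }

end Representation

namespace FDRep

theorem simple_of_isIrreducible {V : Type u} [AddCommGroup V] [Module k V]
    [FiniteDimensional k V] (ρ : Representation k G V) [ρ.IsIrreducible] :
    Simple (FDRep.of ρ) := by
  have : IsSimpleModule k[G] ρ.asModule := ρ.irreducible_iff_isSimpleModule_asModule.1 ‹_›
  have : Simple ((forget₂ (FDRep k G) (Rep k G) ⋙ Rep.toModuleMonoidAlgebra).obj (FDRep.of ρ)) :=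
    simple_of_isSimpleModule (R := k[G]) (M := ρ.asModule)
  exact (forget₂ (FDRep k G) (Rep k G) ⋙ Rep.toModuleMonoidAlgebra).simple_of_simple_obj _

theorem nontrivial_of_simple (V : FDRep k G) [Simple V] : Nontrivial V := by
  let F := forget₂ (FDRep k G) (Rep k G) ⋙ Rep.toModuleMonoidAlgebra
  by_contra h
  rw [not_nontrivial_iff_subsingleton] at h
  exact Simple.not_isZero V (IsZero.of_full_of_faithful_of_isZero F V
    (@ModuleCat.isZero_of_subsingleton _ _ (F.obj V) h))

end FDRep

end Monoid

variable {k G : Type u} [Field k] [Group G]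

namespace MonoidAlgebra

variable (k) in
def centralEigenideal (χ : Subgroup.center G →* kˣ) : Submodule k[G] k[G] where
  carrier := {a | ∀ z : Subgroup.center G, of k G z * a = (χ z : k) • a}
  add_mem' ha hb z := by rw [mul_add, smul_add, ha z, hb z]
  zero_mem' z := by rw [mul_zero, smul_zero]
  smul_mem' b a ha z := by
    have hz : Commute (of k G z) b :=
      of_commute (fun g => (Subgroup.mem_center_iff.1 z.2 g).symm) b
    rw [smul_eq_mul, ← mul_assoc, hz.eq, mul_assoc, ha z, mul_smul_comm]

theorem centralEigenideal_ne_bot [Finite G] (χ : Subgroup.center G →* kˣ) :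
    centralEigenideal k χ ≠ ⊥ := by
  classical
  have := Fintype.ofFinite (Subgroup.center G)
  set e : k[G] := ∑ z : Subgroup.center G, (χ z⁻¹ : k) • of k G z
  have he : e ∈ centralEigenideal k χ := fun z' => by
    rw [Finset.mul_sum, Finset.smul_sum]
    refine Fintype.sum_equiv (Equiv.mulLeft z') _ _ fun z => ?_
    rw [mul_smul_comm, ← map_mul, smul_smul, ← Units.val_mul, ← map_mul]
    simp
  have he1 : e.coeff 1 = 1 := by
    simp only [e, coeff_sum, Finsupp.finsetSum_apply, coeff_smul_apply, of_apply, coeff_single,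
      Finsupp.single_apply]
    rw [Finset.sum_eq_single 1] <;> simp
  intro hbot
  rw [hbot, Submodule.mem_bot] at he
  simp [he] at he1

end MonoidAlgebra

theorem FDRep.exists_simple_with_central_character [Finite G] (χ : Subgroup.center G →* kˣ) :
    ∃ V : FDRep k G, Simple V ∧ ∀ z : Subgroup.center G, V.ρ z = (χ z : k) • LinearMap.id := by
  have := IsArtinianRing.of_finite k k[G]
  obtain ⟨S, hS, hSle⟩ :=
    (eq_bot_or_exists_atom_le _).resolve_left (MonoidAlgebra.centralEigenideal_ne_bot (k := k) χ)
  have := isSimpleModule_iff_isAtom.2 hS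
  have : FiniteDimensional k S :=
    Module.Finite.of_injective (S.subtype.restrictScalars k) Subtype.val_injective
  let ρ := Representation.ofModule' (k := k) (G := G) S
  have := Representation.isIrreducible_ofModule' (k := k) (G := G) S
  refine ⟨FDRep.of ρ, FDRep.simple_of_isIrreducible ρ, fun z => LinearMap.ext fun v => ?_⟩
  change ρ z v = _
  rw [← Representation.asAlgebraHom_of, Representation.ofModule'_asAlgebraHom_apply]
  exact Subtype.ext (hSle v.2 z)

/-- a finite nilpotent group with cyclic center has a faithful irreducible
complex character. -/
theorem exists_faithful_irreducible_char_of_nilpotent_cyclic_center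
    {G : Type} [Group G] [Fintype G] (hnil : Group.IsNilpotent G)
    (hcyc : IsCyclic (Subgroup.center G)) :
    ∃ V : FDRep ℂ G, Simple V ∧ Function.Injective (fun g : G => V.ρ g) := by
  have := hnil
  have := hcyc
  obtain ⟨χ, hχ⟩ := IsCyclic.exists_monoidHom_units_injective (Subgroup.center G) ℂ
  obtain ⟨V, hV, hVχ⟩ := FDRep.exists_simple_with_central_character χ
  have := FDRep.nontrivial_of_simple V
  obtain ⟨v, hv⟩ := exists_ne (0 : V)
  refine ⟨V, hV, MonoidHom.injective_of_injOn_center V.ρ fun x hx y hy hxy => ?_⟩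
  have hscalar := LinearMap.congr_fun (hVχ ⟨x, hx⟩) v
  rw [show V.ρ x = V.ρ y from hxy, hVχ ⟨y, hy⟩] at hscalar
  exact congrArg Subtype.val (hχ (Units.ext (smul_left_injective ℂ hv hscalar).symm))
end
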